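/- If X is a strongly star-Lindelöf space and X is the union of fewer than 𝔟 many Menger subspaces, then X is strongly star-Menger. -/

import Mathlib

open Set Filter Topology

/-- `𝒰` is an open cover of the space `X`. -/
def IsOpenCover {X : Type} [TopologicalSpace X] (𝒰 : Set (Set X)) : Prop :=
  (∀ u ∈ 𝒰, IsOpen u) ∧ ⋃₀ 𝒰 = Set.univ

/-- The star of a set `A` with respect to a collection `𝒰`. -/
def st {X : Type} (A : Set X) (𝒰 : Set (Set X)) : Set X :=
  ⋃₀ {u ∈ 𝒰 | (u ∩ A).Nonempty}
/-- Eventual domination `f ≤* g`. -/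
def EvLE (f g : ℕ → ℕ) : Prop := ∀ᶠ n in Filter.atTop, f n ≤ g n

/-- The dominating number `𝔡`. -/
noncomputable def dominatingNumber : Cardinal :=
  sInf {c | ∃ D : Set (ℕ → ℕ),
    (∀ g : ℕ → ℕ, ∃ f ∈ D, EvLE g f) ∧ Cardinal.mk D = c}

/-- The bounding number `𝔟`. -/
noncomputable def boundingNumber : Cardinal :=
  sInf {c | ∃ B : Set (ℕ → ℕ),
    (¬ ∃ g : ℕ → ℕ, ∀ f ∈ B, EvLE f g) ∧ Cardinal.mk B = c}
/-- The Menger property `S_fin(𝒪,𝒪)`. -/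
def MengerSpace (X : Type) [TopologicalSpace X] : Prop :=
  ∀ 𝒰 : ℕ → Set (Set X), (∀ n, IsOpenCover (𝒰 n)) →
    ∃ 𝒱 : ℕ → Set (Set X), (∀ n, (𝒱 n).Finite ∧ 𝒱 n ⊆ 𝒰 n) ∧
      ∀ x : X, ∃ n, x ∈ ⋃₀ 𝒱 n

/-- The Hurewicz property. -/
def HurewiczSpace (X : Type) [TopologicalSpace X] : Prop :=
  ∀ 𝒰 : ℕ → Set (Set X), (∀ n, IsOpenCover (𝒰 n)) →
    ∃ 𝒱 : ℕ → Set (Set X), (∀ n, (𝒱 n).Finite ∧ 𝒱 n ⊆ 𝒰 n) ∧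
      ∀ x : X, ∀ᶠ n in Filter.atTop, x ∈ ⋃₀ 𝒱 n

/-- The star-Menger property. -/
def StarMengerSpace (X : Type) [TopologicalSpace X] : Prop :=
  ∀ 𝒰 : ℕ → Set (Set X), (∀ n, IsOpenCover (𝒰 n)) →
    ∃ 𝒱 : ℕ → Set (Set X), (∀ n, (𝒱 n).Finite ∧ 𝒱 n ⊆ 𝒰 n) ∧
      ∀ x : X, ∃ n, x ∈ st (⋃₀ 𝒱 n) (𝒰 n)

/-- The star-Hurewicz property. -/
def StarHurewiczSpace (X : Type) [TopologicalSpace X] : Prop :=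
  ∀ 𝒰 : ℕ → Set (Set X), (∀ n, IsOpenCover (𝒰 n)) →
    ∃ 𝒱 : ℕ → Set (Set X), (∀ n, (𝒱 n).Finite ∧ 𝒱 n ⊆ 𝒰 n) ∧
      ∀ x : X, ∀ᶠ n in Filter.atTop, x ∈ st (⋃₀ 𝒱 n) (𝒰 n)

/-- The strongly star-Menger property. -/
def StronglyStarMengerSpace (X : Type) [TopologicalSpace X] : Prop :=
  ∀ 𝒰 : ℕ → Set (Set X), (∀ n, IsOpenCover (𝒰 n)) →
    ∃ F : ℕ → Set X, (∀ n, (F n).Finite) ∧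
      ∀ x : X, ∃ n, x ∈ st (F n) (𝒰 n)

/-- The strongly star-Hurewicz property. -/
def StronglyStarHurewiczSpace (X : Type) [TopologicalSpace X] : Prop :=
  ∀ 𝒰 : ℕ → Set (Set X), (∀ n, IsOpenCover (𝒰 n)) →
    ∃ F : ℕ → Set X, (∀ n, (F n).Finite) ∧
      ∀ x : X, ∀ᶠ n in Filter.atTop, x ∈ st (F n) (𝒰 n)

/-- The star-Lindelöf property. -/
def StarLindelofSpace (X : Type) [TopologicalSpace X] : Prop :=
  ∀ 𝒰 : Set (Set X), IsOpenCover 𝒰 →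
    ∃ 𝒱 ⊆ 𝒰, 𝒱.Countable ∧ st (⋃₀ 𝒱) 𝒰 = Set.univ

/-- The strongly star-Lindelöf property. -/
def StronglyStarLindelofSpace (X : Type) [TopologicalSpace X] : Prop :=
  ∀ 𝒰 : Set (Set X), IsOpenCover 𝒰 →
    ∃ C : Set X, C.Countable ∧ st C 𝒰 = Set.univ

/-!
Fix open covers `𝒰 n` and, by strong star-Lindelöfness, enumerate countable sets `c n 0, c n 1, …`
whose stars cover `X`. The stars of the initial segments, `W n k = St({c n 0, …, c n k}, 𝒰 n)`,
form increasing open covers, so a Menger subspace `Y` yields one function `f_Y` with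
`y ∈ W m (f_Y m)` for infinitely many `m`, for every `y ∈ Y`. Fewer than `𝔟` such functions are
dominated by a single `g`, and the finite sets `{c m 0, …, c m (g m)}` witness strong
star-Mengerness.
-/

section Star

variable {X : Type}

theorem st_mono {A B : Set X} (hAB : A ⊆ B) (𝒰 : Set (Set X)) : st A 𝒰 ⊆ st B 𝒰 :=
  sUnion_mono fun _ hu => ⟨hu.1, hu.2.mono (inter_subset_inter_right _ hAB)⟩

theorem isOpen_st [TopologicalSpace X] {𝒰 : Set (Set X)} (h𝒰 : ∀ u ∈ 𝒰, IsOpen u) (A : Set X) :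
    IsOpen (st A 𝒰) :=
  isOpen_sUnion fun u hu => h𝒰 u hu.1

theorem st_iUnion {ι : Type*} (A : ι → Set X) (𝒰 : Set (Set X)) :
    st (⋃ i, A i) 𝒰 = ⋃ i, st (A i) 𝒰 := by
  ext x
  simp only [st, mem_sUnion, mem_iUnion, mem_ofPred_eq, inter_iUnion, nonempty_iUnion]
  grind

theorem st_empty (𝒰 : Set (Set X)) : st ∅ 𝒰 = ∅ := by
  simp [st]

theorem st_range_eq_iUnion_image_Iic (c : ℕ → X) (𝒰 : Set (Set X)) :
    st (range c) 𝒰 = ⋃ k, st (c '' Iic k) 𝒰 := by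
  rw [← st_iUnion, ← image_iUnion, iUnion_Iic, image_univ]

end Star

theorem StronglyStarLindelofSpace.exists_seq {X : Type} [TopologicalSpace X] [Nonempty X]
    (hX : StronglyStarLindelofSpace X) {𝒰 : Set (Set X)} (h𝒰 : IsOpenCover 𝒰) :
    ∃ c : ℕ → X, st (range c) 𝒰 = univ := by
  obtain ⟨C, hC, hst⟩ := hX 𝒰 h𝒰
  have hCne : C.Nonempty := by
    rw [nonempty_iff_ne_empty]
    rintro rfl
    exact empty_ne_univ (st_empty 𝒰 ▸ hst)
  obtain ⟨c, rfl⟩ := hC.exists_eq_range hCne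
  exact ⟨c, hst⟩

theorem Monotone.exists_sUnion_subset {α : Type*} {W : ℕ → Set α} (hW : Monotone W)
    {𝒱 : Set (Set α)} (hfin : 𝒱.Finite) (hsub : 𝒱 ⊆ range W) : ∃ K, ⋃₀ 𝒱 ⊆ W K := by
  obtain ⟨s, rfl, hinj⟩ := exists_image_eq_injOn_of_subset_range hsub
  obtain ⟨K, hK⟩ := (hfin.of_finite_image hinj).bddAbove
  refine ⟨K, ?_⟩
  rintro x ⟨_, ⟨k, hk, rfl⟩, hx⟩
  exact hW (hK hk) hx

section Menger

variable {Z : Type} [TopologicalSpace Z] {W : ℕ → ℕ → Set Z}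

theorem MengerSpace.exists_mem_of_monotone (hZ : MengerSpace Z)
    (hopen : ∀ n k, IsOpen (W n k)) (hmono : ∀ n, Monotone (W n))
    (hcov : ∀ n, ⋃ k, W n k = univ) : ∃ f : ℕ → ℕ, ∀ z, ∃ n, z ∈ W n (f n) := by
  have h𝒰 : ∀ n, IsOpenCover (range (W n)) := fun n =>
    ⟨forall_mem_range.2 (hopen n), by rw [sUnion_range, hcov n]⟩
  obtain ⟨𝒱, h𝒱, hZ𝒱⟩ := hZ _ h𝒰
  choose f hf using fun n => (hmono n).exists_sUnion_subset (h𝒱 n).1 (h𝒱 n).2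
  exact ⟨f, fun z => (hZ𝒱 z).imp fun n hn => hf n hn⟩

/-- Applying the Menger property to every tail `W (j + ·)` and taking the maximum along the
diagonals gives a single function that works infinitely often. -/
theorem MengerSpace.exists_frequently_mem_of_monotone (hZ : MengerSpace Z)
    (hopen : ∀ n k, IsOpen (W n k)) (hmono : ∀ n, Monotone (W n))
    (hcov : ∀ n, ⋃ k, W n k = univ) :
    ∃ f : ℕ → ℕ, ∀ z, ∃ᶠ m in atTop, z ∈ W m (f m) := by
  choose h hh using fun j => hZ.exists_mem_of_monotone (W := fun n => W (j + n))
    (fun n => hopen (j + n)) (fun n => hmono (j + n)) (fun n => hcov (j + n))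
  refine ⟨fun m => (Finset.range (m + 1)).sup fun j => h j (m - j),
    fun z => frequently_atTop.2 fun j => ?_⟩
  obtain ⟨n, hn⟩ := hh j z
  refine ⟨j + n, Nat.le_add_right j n, hmono _ ?_ hn⟩
  simpa using Finset.le_sup (f := fun t => h t (j + n - t)) (b := j) (Finset.mem_range.2 (by omega))

end Menger

theorem MengerSpace.exists_frequently_mem_of_monotone_subspace {X : Type} [TopologicalSpace X]
    {Y : Set X} (hY : MengerSpace Y) {W : ℕ → ℕ → Set X}
    (hopen : ∀ n k, IsOpen (W n k)) (hmono : ∀ n, Monotone (W n))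
    (hcov : ∀ n, ⋃ k, W n k = univ) :
    ∃ f : ℕ → ℕ, ∀ y ∈ Y, ∃ᶠ m in atTop, y ∈ W m (f m) := by
  obtain ⟨f, hf⟩ := hY.exists_frequently_mem_of_monotone (W := fun n k => (↑) ⁻¹' W n k)
    (fun n k => (hopen n k).preimage continuous_subtype_val)
    (fun n _ _ hkl => preimage_mono (hmono n hkl))
    (fun n => by rw [← preimage_iUnion, hcov n, preimage_univ])
  exact ⟨f, fun y hy => hf ⟨y, hy⟩⟩

theorem exists_evLE_of_mk_lt_boundingNumber {ι : Type} (f : ι → ℕ → ℕ)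
    (hcard : Cardinal.mk ι < boundingNumber) : ∃ g : ℕ → ℕ, ∀ i, EvLE (f i) g := by
  by_contra hunb
  have hle : boundingNumber ≤ Cardinal.mk (range f) :=
    csInf_le' ⟨range f, fun ⟨g, hg⟩ => hunb ⟨g, fun i => hg _ (mem_range_self i)⟩, rfl⟩
  exact (hle.trans Cardinal.mk_range_le).not_gt hcard

theorem stmt (X : Type) [TopologicalSpace X] (hX : StronglyStarLindelofSpace X)
    (ι : Type) (Y : ι → Set X)
    (hcard : Cardinal.mk ι < boundingNumber)
    (hY : ∀ i, MengerSpace (Y i))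
    (hcover : ⋃ i, Y i = Set.univ) :
    StronglyStarMengerSpace X := by
  intro 𝒰 h𝒰
  cases isEmpty_or_nonempty X
  · exact ⟨fun _ => ∅, fun _ => finite_empty, isEmptyElim⟩
  choose c hc using fun n => hX.exists_seq (h𝒰 n)
  have hopen : ∀ n k, IsOpen (st (c n '' Iic k) (𝒰 n)) := fun n _ => isOpen_st (h𝒰 n).1 _
  have hmono : ∀ n, Monotone fun k => st (c n '' Iic k) (𝒰 n) := fun n _ _ hkl =>
    st_mono (image_mono (Iic_subset_Iic.2 hkl)) _
  have hcov : ∀ n, ⋃ k, st (c n '' Iic k) (𝒰 n) = univ := fun n => by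
    rw [← st_range_eq_iUnion_image_Iic, hc n]
  choose f hf using fun i =>
    (hY i).exists_frequently_mem_of_monotone_subspace hopen hmono hcov
  obtain ⟨g, hg⟩ := exists_evLE_of_mk_lt_boundingNumber f hcard
  refine ⟨fun m => c m '' Iic (g m), fun m => (finite_Iic _).image _, fun x => ?_⟩
  obtain ⟨i, hi⟩ := mem_iUnion.1 (hcover.symm ▸ mem_univ x)
  obtain ⟨m, hxm, hfg⟩ := ((hf i x hi).and_eventually (hg i)).exists
  exact ⟨m, hmono m hfg hxm⟩
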